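/- Let n, K, d ≥ 1, γ > 0, α ≥ 0, let x_1, …, x_n ∈ ℝ^d and D_1, …, D_K ∈ ℝ^d be fixed, and set d_{ik} = ‖x_i − D_k‖^2. Let Ω = {μ ∈ ℝ^{n×K} : μ_{ik} ≥ 0, ∑_k μ_{ik} = 1 for all i}, and define F(μ) = ∑_{i,k} μ_{ik} d_{ik} + α ∑_k q_k log q_k + γ ∑_{i,k} μ_{ik} log μ_{ik}, where q_k = (1/n) ∑_i μ_{ik} (convention 0·log 0 = 0). If μ* ∈ Ω has all entries strictly positive and is a local minimizer of F on Ω, then for all i, k: μ*_{ik} = exp(−(1/γ)(d_{ik} + (α/n)(1 + log q*_k))) / ∑_{k'} exp(−(1/γ)(d_{ik'} + (α/n)(1 + log q*_{k'}))), where q*_k = (1/n) ∑_i μ*_{ik}. -/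

import Mathlib

open Filter Topology Finset

/-
Perturbing an interior local minimizer along `e_{ik} - e_{ik'}` keeps it row-stochastic, so the
derivative of `F` in that direction vanishes: the partial derivatives
`∂F/∂μ_{ik} = d_{ik} + (α/n)(1 + log q_k) + γ (1 + log μ_{ik})` are constant along each row.
Hence `μ_{ik} exp((d_{ik} + (α/n)(1 + log q_k))/γ)` does not depend on `k`, and the row
normalization `∑_k μ_{ik} = 1` fixes the constant.
-/

theorem eq_gibbs_of_add_mul_log_eq {κ : Type*} [Fintype κ] {γ : ℝ} (hγ : γ ≠ 0)
    {h μ : κ → ℝ} (hpos : ∀ k, 0 < μ k) (hsum : ∑ k, μ k = 1)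
    (hconst : ∀ k k', h k + γ * Real.log (μ k) = h k' + γ * Real.log (μ k')) (k : κ) :
    μ k = Real.exp (-(1 / γ) * h k) / ∑ k', Real.exp (-(1 / γ) * h k') := by
  have hcross : ∀ k', μ k' * Real.exp (-(1 / γ) * h k) = Real.exp (-(1 / γ) * h k') * μ k := by
    intro k'
    rw [← Real.exp_log (hpos k'), ← Real.exp_log (hpos k), ← Real.exp_add, ← Real.exp_add]
    congr 1
    field_simp
    linarith [hconst k k']
  rw [eq_div_iff (Finset.sum_pos (fun _ _ => Real.exp_pos _) ⟨k, mem_univ k⟩).ne', mul_sum]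
  calc ∑ k', μ k * Real.exp (-(1 / γ) * h k')
      = ∑ k', μ k' * Real.exp (-(1 / γ) * h k) := sum_congr rfl fun k' _ => by
        rw [hcross k', mul_comm]
    _ = Real.exp (-(1 / γ) * h k) := by rw [← sum_mul, hsum, one_mul]

theorem IsLocalMinOn.hasDerivAt_line_eq_zero {E : Type*} [AddCommGroup E] [Module ℝ E]
    [TopologicalSpace E] [ContinuousAdd E] [ContinuousSMul ℝ E] {f : E → ℝ} {s : Set E}
    {x v : E} {f' : ℝ} (hmin : IsLocalMinOn f s x) (hline : ∀ᶠ t in 𝓝 (0 : ℝ), x + t • v ∈ s)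
    (hderiv : HasDerivAt (fun t : ℝ => f (x + t • v)) f' 0) : f' = 0 := by
  have hcont : Continuous fun t : ℝ => x + t • v := by fun_prop
  have htendsto : Tendsto (fun t : ℝ => x + t • v) (𝓝 0) (𝓝[s] x) :=
    tendsto_nhdsWithin_iff.2 ⟨by simpa using hcont.tendsto 0, hline⟩
  have hlocal : IsLocalMin (fun t : ℝ => f (x + t • v)) 0 :=
    IsMinFilter.comp_tendsto (g := fun t : ℝ => x + t • v) (by rw [zero_smul, add_zero]; exact hmin)
      htendsto
  exact hlocal.hasDerivAt_eq_zero hderiv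

theorem hasDerivAt_add_smul_apply {ι κ : Type*} (μ v : ι → κ → ℝ) (i : ι) (k : κ) :
    HasDerivAt (fun t : ℝ => (μ + t • v) i k) (v i k) 0 := by
  simpa using ((hasDerivAt_id (0 : ℝ)).mul_const (v i k)).const_add (μ i k)

theorem HasDerivAt.mul_log {g : ℝ → ℝ} {g' x : ℝ} (hg : HasDerivAt g g' x)
    (hx : g x ≠ 0) :
    HasDerivAt (fun t => g t * Real.log (g t)) ((Real.log (g x) + 1) * g') x :=
  (Real.hasDerivAt_mul_log hx).comp x hg

section RowStochastic

variable {ι κ : Type*} [Fintype κ]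

def rowStochastic (ι κ : Type*) [Fintype κ] : Set (ι → κ → ℝ) :=
  {μ | (∀ i k, 0 ≤ μ i k) ∧ ∀ i, ∑ k, μ i k = 1}

theorem eventually_add_smul_mem_rowStochastic [Finite ι] {μ v : ι → κ → ℝ}
    (hpos : ∀ i k, 0 < μ i k) (hrow : ∀ i, ∑ k, μ i k = 1) (hv : ∀ i, ∑ k, v i k = 0) :
    ∀ᶠ t in 𝓝 (0 : ℝ), μ + t • v ∈ rowStochastic ι κ := by
  have hnonneg : ∀ᶠ t in 𝓝 (0 : ℝ), ∀ i k, 0 < μ i k + t * v i k := by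
    simp only [eventually_all]
    intro i k
    have hcont : Continuous fun t : ℝ => μ i k + t * v i k := by fun_prop
    exact continuousAt_const.eventually_lt hcont.continuousAt (by simpa using hpos i k)
  filter_upwards [hnonneg] with t ht
  refine ⟨fun i k => (ht i k).le, fun i => ?_⟩
  simp only [Pi.add_apply, Pi.smul_apply, smul_eq_mul, sum_add_distrib, ← mul_sum, hrow, hv]
  ring

theorem IsLocalMinOn.rowStochastic_grad_eq [Fintype ι] {f : (ι → κ → ℝ) → ℝ} {μ G : ι → κ → ℝ}
    (hmin : IsLocalMinOn f (rowStochastic ι κ) μ) (hpos : ∀ i k, 0 < μ i k)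
    (hrow : ∀ i, ∑ k, μ i k = 1)
    (hgrad : ∀ v, HasDerivAt (fun t : ℝ => f (μ + t • v)) (∑ i, ∑ k, v i k * G i k) 0)
    (i : ι) (k k' : κ) : G i k = G i k' := by
  classical
  set v : ι → κ → ℝ := Pi.single i (Pi.single k 1 - Pi.single k' 1)
  have hv : ∀ i', ∑ k'', v i' k'' = 0 := by
    intro i'
    by_cases hi : i' = i
    · subst hi
      simp [v, sum_sub_distrib]
    · simp [v, hi]
  have hzero := hmin.hasDerivAt_line_eq_zero
    (eventually_add_smul_mem_rowStochastic hpos hrow hv) (hgrad v)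
  have hdir : ∑ i', ∑ k'', v i' k'' * G i' k'' = G i k - G i k' := by
    rw [Fintype.sum_eq_single i fun i' hi => by simp [v, hi]]
    simp [v, sub_mul, sum_sub_distrib, Pi.single_apply]
  linarith

theorem hasDerivAt_sum_mul_add_smul [Fintype ι] (μ v c : ι → κ → ℝ) :
    HasDerivAt (fun t : ℝ => ∑ i, ∑ k, (μ + t • v) i k * c i k)
      (∑ i, ∑ k, v i k * c i k) 0 :=
  HasDerivAt.fun_sum fun i _ => HasDerivAt.fun_sum fun k _ =>
    (hasDerivAt_add_smul_apply μ v i k).mul_const (c i k)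

theorem hasDerivAt_sum_mul_log_add_smul [Fintype ι] {μ : ι → κ → ℝ} (hμ : ∀ i k, μ i k ≠ 0)
    (v : ι → κ → ℝ) :
    HasDerivAt (fun t : ℝ => ∑ i, ∑ k, (μ + t • v) i k * Real.log ((μ + t • v) i k))
      (∑ i, ∑ k, v i k * (Real.log (μ i k) + 1)) 0 :=
  HasDerivAt.fun_sum fun i _ => HasDerivAt.fun_sum fun k _ => by
    simpa [mul_comm] using
      (hasDerivAt_add_smul_apply μ v i k).mul_log (by simpa using hμ i k)

theorem hasDerivAt_sum_colMass_mul_log_add_smul [Fintype ι] {w : ℝ} {μ : ι → κ → ℝ}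
    (hμ : ∀ k, w * ∑ i, μ i k ≠ 0) (v : ι → κ → ℝ) :
    HasDerivAt
      (fun t : ℝ => ∑ k, (w * ∑ i, (μ + t • v) i k) * Real.log (w * ∑ i, (μ + t • v) i k))
      (∑ i, ∑ k, v i k * (w * (Real.log (w * ∑ i, μ i k) + 1))) 0 := by
  have hcol : ∀ k, HasDerivAt (fun t : ℝ => w * ∑ i, (μ + t • v) i k) (w * ∑ i, v i k) 0 :=
    fun k => (HasDerivAt.fun_sum fun i _ => hasDerivAt_add_smul_apply μ v i k).const_mul w
  refine (HasDerivAt.fun_sum fun k _ =>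
    (hcol k).mul_log (by simpa using hμ k)).congr_deriv ?_
  simp only [zero_smul, add_zero, sum_comm (γ := ι), mul_sum]
  exact sum_congr rfl fun i _ => sum_congr rfl fun k _ => by ring

end RowStochastic

theorem stmt_7_general (n K d : ℕ)
    (γ α : ℝ) (hγ : 0 < γ)
    (x : Fin n → EuclideanSpace ℝ (Fin d)) (D : Fin K → EuclideanSpace ℝ (Fin d)) :
    let dst : Fin n → Fin K → ℝ := fun i k => ‖x i - D k‖ ^ 2
    let Ω : Set (Fin n → Fin K → ℝ) := {μ | (∀ i k, 0 ≤ μ i k) ∧ ∀ i, ∑ k, μ i k = 1}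
    let F : (Fin n → Fin K → ℝ) → ℝ := fun μ =>
      (∑ i, ∑ k, μ i k * dst i k)
      + α * ∑ k, ((1 / (n : ℝ)) * ∑ i, μ i k) * Real.log ((1 / (n : ℝ)) * ∑ i, μ i k)
      + γ * ∑ i, ∑ k, μ i k * Real.log (μ i k)
    ∀ μs ∈ Ω, (∀ i k, 0 < μs i k) → IsLocalMinOn F Ω μs →
      ∀ i k, μs i k =
        Real.exp (-(1 / γ) * (dst i k
            + (α / n) * (1 + Real.log ((1 / (n : ℝ)) * ∑ i', μs i' k)))) /
        ∑ k', Real.exp (-(1 / γ) * (dst i k'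
            + (α / n) * (1 + Real.log ((1 / (n : ℝ)) * ∑ i', μs i' k')))) := by
  intro dst Ω F μs hμs hpos hmin i
  have hcol : ∀ k, (1 / (n : ℝ)) * ∑ i', μs i' k ≠ 0 := fun k =>
    (mul_pos (by simpa using i.pos) (sum_pos (fun i' _ => hpos i' k) ⟨i, mem_univ i⟩)).ne'
  have hgrad : ∀ v, HasDerivAt (fun t : ℝ => F (μs + t • v))
      (∑ i, ∑ k, v i k * (dst i k + α * ((1 / (n : ℝ)) *
        (Real.log ((1 / (n : ℝ)) * ∑ i', μs i' k) + 1)) + γ * (Real.log (μs i k) + 1))) 0 :=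
    fun v => (((hasDerivAt_sum_mul_add_smul μs v dst).add
      ((hasDerivAt_sum_colMass_mul_log_add_smul hcol v).const_mul α)).add
      ((hasDerivAt_sum_mul_log_add_smul (fun i k => (hpos i k).ne') v).const_mul γ)).congr_deriv
      (by simp only [mul_sum, ← sum_add_distrib]
          exact sum_congr rfl fun i _ => sum_congr rfl fun k _ => by ring)
  refine eq_gibbs_of_add_mul_log_eq hγ.ne' (hpos i) (hμs.2 i) fun k k' => ?_
  linear_combination hmin.rowStochastic_grad_eq hpos hμs.2 hgrad i k k'

/-- First-order optimality for the early-model membership objective: an interior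
local minimizer over the row-stochastic matrices satisfies the softmax fixed-point
formula of Proposition 1 (Eq. (1)). -/
theorem stmt_7 (n K d : ℕ) (hn : 1 ≤ n) (hK : 1 ≤ K) (hd : 1 ≤ d)
    (γ α : ℝ) (hγ : 0 < γ) (hα : 0 ≤ α)
    (x : Fin n → EuclideanSpace ℝ (Fin d)) (D : Fin K → EuclideanSpace ℝ (Fin d)) :
    let dst : Fin n → Fin K → ℝ := fun i k => ‖x i - D k‖ ^ 2
    let Ω : Set (Fin n → Fin K → ℝ) := {μ | (∀ i k, 0 ≤ μ i k) ∧ ∀ i, ∑ k, μ i k = 1}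
    let F : (Fin n → Fin K → ℝ) → ℝ := fun μ =>
      (∑ i, ∑ k, μ i k * dst i k)
      + α * ∑ k, ((1 / (n : ℝ)) * ∑ i, μ i k) * Real.log ((1 / (n : ℝ)) * ∑ i, μ i k)
      + γ * ∑ i, ∑ k, μ i k * Real.log (μ i k)
    ∀ μs ∈ Ω, (∀ i k, 0 < μs i k) → IsLocalMinOn F Ω μs →
      ∀ i k, μs i k =
        Real.exp (-(1 / γ) * (dst i k
            + (α / n) * (1 + Real.log ((1 / (n : ℝ)) * ∑ i', μs i' k)))) /
        ∑ k', Real.exp (-(1 / γ) * (dst i k'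
            + (α / n) * (1 + Real.log ((1 / (n : ℝ)) * ∑ i', μs i' k')))) :=
  stmt_7_general n K d γ α hγ x D
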